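/- Quantum partition of identity indexed by stopping times: let H be a complex Hilbert space, K ≥ 1 an integer, (P_i)_{i=1}^K bounded operators on H with ∑_{i=1}^K P_i^* P_i = Id_H, and V a unitary operator on H; for an integer m set P_i(m) := V^{−m} P_i V^{m}. Let f be a function on {1,…,K}² with 0 < a ≤ f ≤ b and let T ≥ b. For a word α = (α₀,…,α_k) define τ_α := P_{α_k}(k) P_{α_{k−1}}(k−1) ⋯ P_{α_1}(1) P_{α_0}. Then ∑_{α ∈ I(T)} τ_α^* τ_α = Id_H (the sum being finite). -/

import Mathlib

/-- Heisenberg evolution `P(m) := V^{-m} P V^{m}` of a bounded operator `P` under a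
unitary `V` (for a unitary `V` one has `V⁻¹ = star V = V^*`). -/
noncomputable def heis {H : Type*} [NormedAddCommGroup H] [InnerProductSpace ℂ H]
    [CompleteSpace H] (V P : H →L[ℂ] H) (m : ℕ) : H →L[ℂ] H :=
  (star V) ^ m * P * V ^ m

/-- The operator `τ_α := P_{α_k}(k) P_{α_{k-1}}(k-1) ⋯ P_{α_1}(1) P_{α_0}` attached to the
word `(α₀, …, α_k)` (encoded by `k` and a sequence `α : ℕ → Fin K` of letters). -/
noncomputable def tauWord {H : Type*} [NormedAddCommGroup H] [InnerProductSpace ℂ H]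
    [CompleteSpace H] {K : ℕ} (V : H →L[ℂ] H) (P : Fin K → H →L[ℂ] H)
    (α : ℕ → Fin K) : ℕ → (H →L[ℂ] H)
  | 0 => P (α 0)
  | (k + 1) => heis V (P (α (k + 1))) (k + 1) * tauWord V P α k

/-- A word `l = (α₀, …, α_k)` (a list of length `k + 1`, indexed with default letter `d`)
belongs to the stopping-time index set `I(T)` if `k ≥ 3`,
`∑_{i=1}^{k-2} f (α_i) (α_{i+1}) ≤ T` and `T < ∑_{i=1}^{k-1} f (α_i) (α_{i+1})`. -/
def memIword {K : ℕ} (f : Fin K → Fin K → ℝ) (T : ℝ) (d : Fin K) (l : List (Fin K)) : Prop :=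
  4 ≤ l.length ∧
    (∑ i ∈ Finset.Icc 1 (l.length - 3), f (l.getD i d) (l.getD (i + 1) d)) ≤ T ∧
    T < ∑ i ∈ Finset.Icc 1 (l.length - 2), f (l.getD i d) (l.getD (i + 1) d)

/-!
Appending a letter `j` to a word `l` of length `n` multiplies `τ_l` on the left by `P_j(n)`,
and `(P_j(n))_j` is again a partition of identity since `V^n` is unitary. Hence
`w l := τ_l^* τ_l` is harmonic: `∑_j w (l ++ [j]) = w l`. Run the word letter by letter and
call it alive while `∑_{i=1}^{k-1} f(α_i, α_{i+1}) ≤ T`; being alive is inherited by prefixes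
and, since `f ≥ a > 0`, fails for all long words. Summing `w` over the alive words of length
`N` and the words that stopped before `N` gives a quantity that does not depend on `N`, equal
to `∑_j P_j^* P_j = 1`; for `N` large only the stopped words remain, and these form `I(T)`
because `T ≥ b` keeps every word of length at most three alive.
-/

open Finset

theorem List.append_singleton_injective {ι : Type*} :
    Function.Injective fun p : List ι × ι => p.1 ++ [p.2] := fun p q h => by
  obtain ⟨h₁, h₂⟩ := List.append_inj' h rfl
  exact Prod.ext h₁ (List.singleton_inj.mp h₂)

def wordsOfLength (ι : Type*) [Fintype ι] : ℕ → Finset (List ι)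
  | 0 => {[]}
  | n + 1 => (wordsOfLength ι n ×ˢ univ).map ⟨_, List.append_singleton_injective⟩

section StoppingTime

variable {ι M : Type*} [Fintype ι] [AddCommMonoid M]

theorem mem_wordsOfLength {n : ℕ} {l : List ι} : l ∈ wordsOfLength ι n ↔ l.length = n := by
  induction n generalizing l with
  | zero => simp [wordsOfLength]
  | succ n ih =>
    simp only [wordsOfLength, mem_map, mem_product, mem_univ, and_true,
      Function.Embedding.coeFn_mk, Prod.exists, ih]
    constructor
    · rintro ⟨l, j, rfl, rfl⟩
      simp
    · intro h
      have hl : l ≠ [] := by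
        rintro rfl
        simp at h
      exact ⟨l.dropLast, l.getLast hl, by simp [h], List.dropLast_append_getLast hl⟩

theorem sum_wordsOfLength_succ (g : List ι → M) (n : ℕ) :
    ∑ l ∈ wordsOfLength ι (n + 1), g l = ∑ l ∈ wordsOfLength ι n, ∑ j, g (l ++ [j]) := by
  rw [wordsOfLength, sum_map, sum_product]
  rfl

variable (w : List ι → M) (alive : List ι → Prop) [DecidablePred alive]

theorem sum_alive_eq_sum_stopped_add_sum_alive_succ
    (hw : ∀ l ≠ [], ∑ j, w (l ++ [j]) = w l) (hclosed : ∀ l j, alive (l ++ [j]) → alive l)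
    {n : ℕ} (hn : n ≠ 0) :
    ∑ l ∈ wordsOfLength ι n with alive l, w l =
      ∑ l ∈ wordsOfLength ι (n + 1) with alive l.dropLast ∧ ¬ alive l, w l +
        ∑ l ∈ wordsOfLength ι (n + 1) with alive l, w l := by
  have hsplit : ∀ l : List ι, l ≠ [] → (if alive l.dropLast then w l else 0) =
      (if alive l.dropLast ∧ ¬ alive l then w l else 0) + if alive l then w l else 0 := by
    intro l hl
    have hparent := hclosed l.dropLast (l.getLast hl)
    rw [List.dropLast_append_getLast hl] at hparent
    by_cases h : alive l <;> simp [h, hparent]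
  simp only [sum_filter, ← sum_add_distrib]
  calc ∑ l ∈ wordsOfLength ι n, (if alive l then w l else 0)
      = ∑ l ∈ wordsOfLength ι n, ∑ j, if alive (l ++ [j]).dropLast then w (l ++ [j]) else 0 := by
        refine sum_congr rfl fun l hl => ?_
        have hne : l ≠ [] := by
          rintro rfl
          exact hn (mem_wordsOfLength.mp hl).symm
        simp only [List.dropLast_concat]
        split_ifs <;> simp [hw l hne]
    _ = _ := by
        rw [← sum_wordsOfLength_succ (fun l => if alive l.dropLast then w l else 0)]
        refine sum_congr rfl fun l hl => hsplit l ?_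
        rintro rfl
        simp [mem_wordsOfLength] at hl

theorem sum_stopped_add_sum_alive
    (hw : ∀ l ≠ [], ∑ j, w (l ++ [j]) = w l) (hclosed : ∀ l j, alive (l ++ [j]) → alive l)
    {N : ℕ} (hN : 1 ≤ N) :
    ∑ n ∈ Ico 1 N, ∑ l ∈ wordsOfLength ι (n + 1) with alive l.dropLast ∧ ¬ alive l, w l +
      ∑ l ∈ wordsOfLength ι N with alive l, w l =
        ∑ l ∈ wordsOfLength ι 1 with alive l, w l := by
  induction N, hN using Nat.le_induction with
  | base => simp
  | succ N hN ih =>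
    rw [sum_Ico_succ_top hN, add_assoc,
      ← sum_alive_eq_sum_stopped_add_sum_alive_succ w alive hw hclosed (by omega), ih]

theorem sum_stopped_eq_sum_alive_length_one
    (hw : ∀ l ≠ [], ∑ j, w (l ++ [j]) = w l) (hclosed : ∀ l j, alive (l ++ [j]) → alive l)
    {N : ℕ} (hdead : ∀ l : List ι, N ≤ l.length → ¬ alive l) (S : Finset (List ι))
    (hS : ∀ l, l ∈ S ↔ 2 ≤ l.length ∧ alive l.dropLast ∧ ¬ alive l) :
    ∑ l ∈ S, w l = ∑ l ∈ wordsOfLength ι 1 with alive l, w l := by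
  have hlength : ∀ l ∈ S, l.length - 1 ∈ Ico 1 (N + 1) := by
    intro l hl
    obtain ⟨h2, hparent, -⟩ := (hS l).mp hl
    have hshort : l.dropLast.length < N := not_le.mp fun h => hdead _ h hparent
    rw [List.length_dropLast] at hshort
    rw [mem_Ico]
    omega
  have hnone : ∑ l ∈ wordsOfLength ι (N + 1) with alive l, w l = 0 := by
    refine sum_eq_zero fun l hl => absurd (mem_filter.mp hl).2 (hdead l ?_)
    rw [mem_wordsOfLength.mp (mem_filter.mp hl).1]
    omega
  rw [← sum_stopped_add_sum_alive w alive hw hclosed (by omega : 1 ≤ N + 1), hnone, add_zero,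
    ← sum_fiberwise_of_maps_to hlength]
  refine sum_congr rfl fun n hn => ?_
  rw [mem_Ico] at hn
  congr 1
  ext l
  simp only [mem_filter, hS, mem_wordsOfLength]
  constructor
  · rintro ⟨⟨-, hstop⟩, hlen⟩
    exact ⟨by omega, hstop⟩
  · rintro ⟨hlen, hstop⟩
    exact ⟨⟨by omega, hstop⟩, by omega⟩

end StoppingTime

theorem sum_star_mul_conj_unitary {R ι : Type*} [Semiring R] [StarRing R] [Fintype ι]
    (P : ι → R) (hP : ∑ i, star (P i) * P i = 1) {u : R} (hu : u ∈ unitary R) :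
    ∑ i, star (star u * P i * u) * (star u * P i * u) = 1 := by
  have hconj : ∀ i, star (star u * P i * u) * (star u * P i * u) =
      star u * (star (P i) * P i) * u := by
    intro i
    simp only [star_mul, star_star, mul_assoc]
    rw [← mul_assoc u, Unitary.mul_star_self_of_mem hu, one_mul]
  simp only [hconj, ← sum_mul, ← mul_sum, hP, mul_one, Unitary.star_mul_self_of_mem hu]

section Tau

variable {H : Type*} [NormedAddCommGroup H] [InnerProductSpace ℂ H] [CompleteSpace H]
  {K : ℕ} (V : H →L[ℂ] H) (P : Fin K → H →L[ℂ] H)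

theorem sum_star_heis_mul_heis (hP : ∑ i, star (P i) * P i = 1)
    (hV : V ∈ unitary (H →L[ℂ] H)) (m : ℕ) :
    ∑ j, star (heis V (P j) m) * heis V (P j) m = 1 := by
  simpa only [heis, star_pow] using sum_star_mul_conj_unitary P hP (pow_mem hV m)

theorem tauWord_congr {α β : ℕ → Fin K} {k : ℕ} (h : ∀ i ≤ k, α i = β i) :
    tauWord V P α k = tauWord V P β k := by
  induction k with
  | zero => simp only [tauWord, h 0 le_rfl]
  | succ k ih => simp only [tauWord, h (k + 1) le_rfl, ih fun i hi => h i (by omega)]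

noncomputable def tauList (d : Fin K) (l : List (Fin K)) : H →L[ℂ] H :=
  tauWord V P (fun i => l.getD i d) (l.length - 1)

variable {V P} {d : Fin K}

theorem tauList_append {l : List (Fin K)} (hl : l ≠ []) (j : Fin K) :
    tauList V P d (l ++ [j]) = heis V (P j) l.length * tauList V P d l := by
  obtain ⟨n, hn⟩ : ∃ n, l.length = n + 1 := Nat.exists_eq_succ_of_ne_zero (by simpa using hl)
  have hlast : (l ++ [j]).getD (n + 1) d = j := by
    rw [List.getD_append_right _ _ _ _ hn.le]
    simp [hn]
  have hprefix : ∀ i ≤ n, (l ++ [j]).getD i d = l.getD i d :=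
    fun i hi => List.getD_append _ _ _ _ (by omega)
  simp only [tauList, List.length_append, List.length_singleton, hn, Nat.add_sub_cancel]
  rw [tauWord, hlast, tauWord_congr V P hprefix]

theorem sum_star_tauList_append_mul (hP : ∑ i, star (P i) * P i = 1)
    (hV : V ∈ unitary (H →L[ℂ] H)) {l : List (Fin K)} (hl : l ≠ []) :
    ∑ j, star (tauList V P d (l ++ [j])) * tauList V P d (l ++ [j]) =
      star (tauList V P d l) * tauList V P d l := by
  have hterm : ∀ j, star (tauList V P d (l ++ [j])) * tauList V P d (l ++ [j]) =
      star (tauList V P d l) * (star (heis V (P j) l.length) * heis V (P j) l.length) *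
        tauList V P d l := by
    intro j
    simp only [tauList_append hl, star_mul, mul_assoc]
  simp only [hterm, ← sum_mul, ← mul_sum, sum_star_heis_mul_heis V P hP hV, mul_one]

end Tau

section WordCost

variable {ι : Type*} (f : ι → ι → ℝ) (d : ι)

/-- `∑_{i=1}^{k-1} f(α_i, α_{i+1})` for the word `l = (α₀, …, α_k)` of length `k + 1`. -/
def wordCost (l : List ι) : ℝ :=
  ∑ i ∈ Icc 1 (l.length - 2), f (l.getD i d) (l.getD (i + 1) d)

theorem wordCost_dropLast (l : List ι) :
    wordCost f d l.dropLast = ∑ i ∈ Icc 1 (l.length - 3), f (l.getD i d) (l.getD (i + 1) d) := by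
  rw [wordCost, List.length_dropLast, show l.length - 1 - 2 = l.length - 3 by omega]
  refine sum_congr rfl fun i hi => ?_
  rw [mem_Icc] at hi
  simp only [List.getD_eq_getElem?_getD, List.getElem?_dropLast]
  rw [if_pos (by omega), if_pos (by omega)]

theorem wordCost_dropLast_le (hf : ∀ i j, 0 ≤ f i j) (l : List ι) :
    wordCost f d l.dropLast ≤ wordCost f d l := by
  rw [wordCost_dropLast]
  exact sum_le_sum_of_subset_of_nonneg (Icc_subset_Icc_right (by omega)) fun _ _ _ => hf _ _

theorem mul_le_wordCost {a : ℝ} (hf : ∀ i j, a ≤ f i j) (l : List ι) :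
    (l.length - 2 : ℕ) * a ≤ wordCost f d l := by
  have h := card_nsmul_le_sum (Icc 1 (l.length - 2)) _ a fun i _ =>
    hf (l.getD i d) (l.getD (i + 1) d)
  rwa [Nat.card_Icc, Nat.add_sub_cancel, nsmul_eq_mul] at h

theorem wordCost_le_mul {b : ℝ} (hf : ∀ i j, f i j ≤ b) (l : List ι) :
    wordCost f d l ≤ (l.length - 2 : ℕ) * b := by
  have h := sum_le_card_nsmul (Icc 1 (l.length - 2)) _ b fun i _ =>
    hf (l.getD i d) (l.getD (i + 1) d)
  rwa [Nat.card_Icc, Nat.add_sub_cancel, nsmul_eq_mul] at h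

theorem exists_forall_length_le_lt_wordCost {a : ℝ} (ha : 0 < a) (hf : ∀ i j, a ≤ f i j)
    (T : ℝ) : ∃ N, ∀ l : List ι, N ≤ l.length → T < wordCost f d l := by
  obtain ⟨N, hN⟩ := exists_nat_gt (T / a)
  refine ⟨N + 2, fun l hl => ?_⟩
  have hcount : (N : ℝ) ≤ (l.length - 2 : ℕ) := by exact_mod_cast (by omega : N ≤ l.length - 2)
  rw [div_lt_iff₀ ha] at hN
  nlinarith [mul_le_wordCost f d hf l]

end WordCost

theorem memIword_iff {K : ℕ} {f : Fin K → Fin K → ℝ} {d : Fin K} {b T : ℝ}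
    (hf : ∀ i j, f i j ≤ b) (hb : 0 ≤ b) (hT : b ≤ T) (l : List (Fin K)) :
    memIword f T d l ↔ 2 ≤ l.length ∧ wordCost f d l.dropLast ≤ T ∧ ¬ wordCost f d l ≤ T := by
  rw [memIword, ← wordCost_dropLast, not_le]
  refine ⟨fun ⟨h4, h⟩ => ⟨by omega, h⟩, fun ⟨_, hparent, hstop⟩ => ⟨?_, hparent, hstop⟩⟩
  by_contra! hshort
  have hcount : ((l.length - 2 : ℕ) : ℝ) ≤ 1 := by exact_mod_cast (by omega : l.length - 2 ≤ 1)
  have hcheap : wordCost f d l ≤ T := (wordCost_le_mul f d hf l).trans (by nlinarith)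
  exact hcheap.not_gt hstop

theorem quantum_partition_of_identity_stopping_times
    {H : Type*} [NormedAddCommGroup H] [InnerProductSpace ℂ H] [CompleteSpace H]
    {K : ℕ} (hK : 0 < K)
    (P : Fin K → H →L[ℂ] H) (hP : ∑ i : Fin K, star (P i) * P i = 1)
    (V : H →L[ℂ] H) (hV : V ∈ unitary (H →L[ℂ] H))
    (a b : ℝ) (ha : 0 < a)
    (f : Fin K → Fin K → ℝ) (hf : ∀ i j, a ≤ f i j ∧ f i j ≤ b)
    (T : ℝ) (hT : b ≤ T)
    (hfin : {l : List (Fin K) | memIword f T ⟨0, hK⟩ l}.Finite) :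
    ∑ l ∈ hfin.toFinset,
        star (tauWord V P (fun i => l.getD i ⟨0, hK⟩) (l.length - 1)) *
          tauWord V P (fun i => l.getD i ⟨0, hK⟩) (l.length - 1) = 1 := by
  classical
  have hf₀ : ∀ i j, 0 ≤ f i j := fun i j => ha.le.trans (hf i j).1
  have hb : 0 ≤ b := (hf₀ ⟨0, hK⟩ ⟨0, hK⟩).trans (hf _ _).2
  obtain ⟨N, hdead⟩ := exists_forall_length_le_lt_wordCost f ⟨0, hK⟩ ha (fun i j => (hf i j).1) T
  refine (sum_stopped_eq_sum_alive_length_one (fun l => star (tauList V P _ l) * tauList V P _ l)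
    (fun l => wordCost f ⟨0, hK⟩ l ≤ T) (fun l hl => sum_star_tauList_append_mul hP hV hl)
    (fun l j h => by simpa using (wordCost_dropLast_le f _ hf₀ (l ++ [j])).trans h)
    (fun l hl => not_le.mpr (hdead l hl)) hfin.toFinset
    fun l => hfin.mem_toFinset.trans (memIword_iff (fun i j => (hf i j).2) hb hT l)).trans ?_
  rw [filter_true_of_mem fun l hl => by simp [wordCost, mem_wordsOfLength.mp hl, hb.trans hT],
    sum_wordsOfLength_succ, wordsOfLength, sum_singleton]
  exact hP
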